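/- Let H, E, ι, λ > 0 and f ∈ H be as in the context. If ‖f‖_{E*} ≤ 1/(2λ), then for every u ∈ E one has ‖u‖_E + λ‖f − ι(u)‖_H² ≥ λ‖f‖_H²; that is, the functional ‖u‖_E + λ‖v‖_H² over decompositions f = ι(u) + v attains its minimum at u = 0, v = f. -/

import Mathlib

open MeasureTheory

noncomputable section

/-- The dual norm `‖f‖_{E*} = sup { ⟨f, ι e⟩ : ‖e‖ ≤ 1 }` of `f ∈ H` relative to the
continuous embedding `ι : E → H`. -/
def dualNorm {E H : Type*} [NormedAddCommGroup E] [NormedSpace ℝ E]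
    [NormedAddCommGroup H] [InnerProductSpace ℝ H] (ι : E →L[ℝ] H) (f : H) : ℝ :=
  sSup {r : ℝ | ∃ e : E, ‖e‖ ≤ 1 ∧ r = inner ℝ f (ι e)}

/-! Expanding the square, `λ‖f - ι u‖² = λ‖f‖² - 2λ⟪f, ι u⟫ + λ‖ι u‖²`, and
`2λ⟪f, ι u⟫ ≤ 2λ ‖f‖_{E*} ‖u‖ ≤ ‖u‖`, so the linear term is absorbed by `‖u‖`. -/

section DualNorm

variable {E H : Type*} [NormedAddCommGroup E] [NormedSpace ℝ E]
  [NormedAddCommGroup H] [InnerProductSpace ℝ H]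

theorem bddAbove_dualNorm_set (ι : E →L[ℝ] H) (f : H) :
    BddAbove {r : ℝ | ∃ e : E, ‖e‖ ≤ 1 ∧ r = inner ℝ f (ι e)} := by
  refine ⟨‖f‖ * (‖ι‖ * 1), ?_⟩
  rintro r ⟨e, he, rfl⟩
  exact (real_inner_le_norm f (ι e)).trans
    (mul_le_mul_of_nonneg_left (ι.le_opNorm_of_le he) (norm_nonneg f))

theorem inner_le_dualNorm (ι : E →L[ℝ] H) (f : H) {e : E} (he : ‖e‖ ≤ 1) :
    inner ℝ f (ι e) ≤ dualNorm ι f :=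
  le_csSup (bddAbove_dualNorm_set ι f) ⟨e, he, rfl⟩

theorem inner_le_dualNorm_mul_norm (ι : E →L[ℝ] H) (f : H) (u : E) :
    inner ℝ f (ι u) ≤ dualNorm ι f * ‖u‖ := by
  rcases eq_or_ne u 0 with rfl | hu
  · simp
  have hu_pos : 0 < ‖u‖ := norm_pos_iff.mpr hu
  have hunit : ‖‖u‖⁻¹ • u‖ ≤ 1 := by
    rw [norm_smul, norm_inv, norm_norm, inv_mul_cancel₀ hu_pos.ne']
  have h := inner_le_dualNorm ι f hunit
  rw [map_smul, real_inner_smul_right, inv_mul_le_iff₀ hu_pos, mul_comm] at h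
  exact h

end DualNorm

theorem stmt1_general {E H : Type*} [NormedAddCommGroup E] [NormedSpace ℝ E]
    [NormedAddCommGroup H] [InnerProductSpace ℝ H]
    (ι : E →L[ℝ] H)
    (lam : ℝ) (hlam : 0 < lam) (f : H)
    (hf : dualNorm ι f ≤ 1 / (2 * lam)) :
    ∀ u : E, ‖u‖ + lam * ‖f - ι u‖ ^ 2 ≥ lam * ‖f‖ ^ 2 := by
  intro u
  have hdual : 2 * lam * dualNorm ι f ≤ 1 := by
    rwa [le_div_iff₀ (by positivity), mul_comm] at hf
  have hlinear : 2 * lam * inner ℝ f (ι u) ≤ ‖u‖ :=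
    calc 2 * lam * inner ℝ f (ι u) ≤ 2 * lam * (dualNorm ι f * ‖u‖) := by
          gcongr; exact inner_le_dualNorm_mul_norm ι f u
      _ = 2 * lam * dualNorm ι f * ‖u‖ := by ring
      _ ≤ ‖u‖ := mul_le_of_le_one_left (norm_nonneg u) hdual
  have hquad : 0 ≤ lam * ‖ι u‖ ^ 2 := by positivity
  rw [norm_sub_sq_real]
  linarith

/-- if `‖f‖_{E*} ≤ 1/(2λ)`, then for every `u ∈ E`,
`‖u‖_E + λ‖f − ι u‖² ≥ λ‖f‖²`, i.e. the minimum is attained at `u = 0`, `v = f`. -/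
theorem stmt1 {E H : Type*} [NormedAddCommGroup E] [NormedSpace ℝ E]
    [NormedAddCommGroup H] [InnerProductSpace ℝ H]
    (ι : E →L[ℝ] H) (hι : Function.Injective ι)
    (lam : ℝ) (hlam : 0 < lam) (f : H)
    (hf : dualNorm ι f ≤ 1 / (2 * lam)) :
    ∀ u : E, ‖u‖ + lam * ‖f - ι u‖ ^ 2 ≥ lam * ‖f‖ ^ 2 :=
  stmt1_general ι lam hlam f hf

end
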